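/- Let F : T → S be an exact functor between triangulated categories with t-structures, and assume both T and S have derived injectives. If F admits a t-exact left adjoint G, then F preserves derived injectives: for every injective object I of T^♥ one has F(L_T(I)) ≅ L_S(F^♥(I)), where F^♥ is the induced functor between the hearts; in particular F restricts to a functor DGInj(T) → DGInj(S). -/

import Mathlib

/-!
An object `L` with `Hom(U, L) = 0` for every `U` in `T_{≤-1}` or in `T_{≥1}` is a derived
injective for `H⁰(L)`: the truncation triangles of `X` reduce bijectivity of
`Hom(X, L) → Hom(H⁰X, H⁰L)` to `X` in the heart, where it is the adjunction property of `H⁰`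
on `T_{≥0}`. These vanishings pass from `L(I)` to `F(L(I))` by adjunction, because `G` is
t-exact. The morphism `η : I ⟶ L(I)` corresponding to `H⁰(I) ≅ I` induces bijections
`Hom(W, F I) ≅ Hom(W, F L(I))` for `W` in `S_{≤0}`, hence `H⁰(F I) ≅ H⁰(F L(I))` by
Yoneda.
Finally `G` and `F` induce an adjunction `G^♥ ⊣ F^♥` between the hearts, and `G^♥` preserves
monomorphisms because the fibre of a monomorphism of the heart lies in `S_{≥1}`; so
`F^♥(I) = H⁰(F I)` is injective.
-/

open CategoryTheory Category Limits Pretriangulated Triangulated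

universe v u

variable {C : Type u} [Category.{v} C] [Preadditive C] [HasZeroObject C]
  [HasShift C ℤ] [∀ n : ℤ, (shiftFunctor C n).Additive] [Pretriangulated C]

/-- The heart `T^♥ = T_{≤0} ∩ T_{≥0}` of a t-structure, as a full subcategory. -/
abbrev THeart (t : TStructure C) := ObjectProperty.FullSubcategory (fun X : C => t.le 0 X ∧ t.ge 0 X)

/-- The inclusion `T^♥ ⥤ C`. -/
abbrev THeartIncl (t : TStructure C) : THeart t ⥤ C :=
  ObjectProperty.ι (fun X : C => t.le 0 X ∧ t.ge 0 X)

/-- The data of the cohomological functor `H⁰ = τ≤0 τ≥0 : C ⥤ T^♥` associated to a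
t-structure `t`, axiomatized by its characteristic properties: it is a homological
functor restricting to the identity on the heart, it kills `T_{≥1}` and `T_{≤-1}`,
and it realizes the truncation adjunctions on the aisles
(`Hom(X, Y) ≅ Hom(H⁰X, Y)` for `X ∈ T_{≤0}`, `Y ∈ T^♥`, and dually). -/
structure TCohomology (t : TStructure C) [Abelian (THeart t)] where
  H : C ⥤ THeart t
  homological : H.IsHomological
  restriction : THeartIncl t ⋙ H ≅ 𝟭 (THeart t)
  zero_of_ge : ∀ X : C, t.ge 1 X → IsZero (H.obj X)
  zero_of_le : ∀ X : C, t.le (-1) X → IsZero (H.obj X)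
  bij_le : ∀ (X : C) (Y : THeart t), t.le 0 X →
    Function.Bijective (fun f : X ⟶ Y.obj => H.map f ≫ restriction.hom.app Y)
  bij_ge : ∀ (X : C) (Y : THeart t), t.ge 0 X →
    Function.Bijective (fun f : Y.obj ⟶ X => restriction.inv.app Y ≫ H.map f)

/-- `LI` is *the derived injective associated to* `I ∈ T^♥` when it represents the
functor `T^♥(H⁰(-), I)`, i.e. `T(X, LI) ≅ T^♥(H⁰X, I)` naturally in `X`. -/
def IsDerivedInjective (t : TStructure C) [Abelian (THeart t)] (h : TCohomology t)
    (I : THeart t) (LI : C) : Prop :=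
  ∃ e : ∀ X : C, (X ⟶ LI) ≃ (h.H.obj X ⟶ I),
    ∀ (X Y : C) (f : X ⟶ Y) (g : Y ⟶ LI), e X (f ≫ g) = h.H.map f ≫ e Y g

universe v₂ u₂

-- The heart carries the abelian structure of the hypothesis `[Abelian (THeart t)]`; the
-- preadditive structure inherited from the ambient category would give a second, a priori
-- different, family of zero morphisms.
attribute [-instance] CategoryTheory.Preadditive.fullSubcategory

lemma CategoryTheory.Pretriangulated.bijective_mor₁_comp (T : Triangle C)
    (hT : T ∈ distTriang C) {L : C}
    (h₃ : ∀ f : T.obj₃ ⟶ L, f = 0) (h₃' : ∀ f : T.obj₃⟦(-1 : ℤ)⟧ ⟶ L, f = 0) :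
    Function.Bijective (fun g : T.obj₂ ⟶ L => T.mor₁ ≫ g) := by
  refine ⟨fun g g' hgg' => ?_, fun u => ?_⟩
  · obtain ⟨k, hk⟩ := Triangle.yoneda_exact₂ T hT (g - g')
      (by simpa [Preadditive.comp_sub, sub_eq_zero] using hgg')
    rw [h₃ k, comp_zero] at hk
    exact sub_eq_zero.1 hk
  · obtain ⟨g, hg⟩ := Triangle.yoneda_exact₂ _ (inv_rot_of_distTriang T hT) u (h₃' _)
    exact ⟨g, hg.symm⟩

namespace CategoryTheory.Functor

variable {A : Type*} [Category A] [Abelian A] (H : C ⥤ A) [H.IsHomological]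

lemma mono_map_mor₂_of_isZero (T : Triangle C) (hT : T ∈ distTriang C)
    (h : IsZero (H.obj T.obj₁)) : Mono (H.map T.mor₂) :=
  (H.map_distinguished_exact T hT).mono_g (h.eq_of_src _ _)

lemma epi_map_mor₁_of_isZero (T : Triangle C) (hT : T ∈ distTriang C)
    (h : IsZero (H.obj T.obj₃)) : Epi (H.map T.mor₁) :=
  (H.map_distinguished_exact T hT).epi_f (h.eq_of_tgt _ _)

lemma bijective_map_iff_of_distTriang (T : Triangle C) (hT : T ∈ distTriang C) {L : C}
    (h₃ : ∀ f : T.obj₃ ⟶ L, f = 0) (h₃' : ∀ f : T.obj₃⟦(-1 : ℤ)⟧ ⟶ L, f = 0)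
    (hH₃ : IsZero (H.obj T.obj₃)) (hH₃' : IsZero (H.obj (T.obj₃⟦(-1 : ℤ)⟧))) :
    Function.Bijective (fun f : T.obj₁ ⟶ L => H.map f) ↔
      Function.Bijective (fun f : T.obj₂ ⟶ L => H.map f) := by
  have : Mono (H.map T.mor₁) :=
    H.mono_map_mor₂_of_isZero _ (inv_rot_of_distTriang T hT) hH₃'
  have := H.epi_map_mor₁_of_isZero T hT hH₃
  have := isIso_of_mono_of_epi (H.map T.mor₁)
  have hcomm : (fun f : T.obj₁ ⟶ L => H.map f) ∘ (fun g => T.mor₁ ≫ g) =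
      (fun u => H.map T.mor₁ ≫ u) ∘ (fun g : T.obj₂ ⟶ L => H.map g) :=
    funext fun g => H.map_comp T.mor₁ g
  rw [← (bijective_mor₁_comp T hT h₃ h₃').of_comp_iff, hcomm,
    ((isIso_iff_coyoneda_map_bijective _).1 ‹_› _).of_comp_iff']

end CategoryTheory.Functor

namespace CategoryTheory.Triangulated.TStructure

lemma ge_of_hom_eq_zero (t : TStructure C) {n : ℤ} {L : C}
    (h : ∀ U, t.le (n - 1) U → ∀ f : U ⟶ L, f = 0) : t.ge n L :=
  ((t.isGE_iff_orthogonal (n - 1) n (by omega) L).2 fun U f hU => h U hU.le f).ge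

end CategoryTheory.Triangulated.TStructure

attribute [instance] TCohomology.homological

namespace TCohomology

variable {t : TStructure C} [Abelian (THeart t)]

noncomputable def homEquivOfGE (h : TCohomology t) (X : C) (hX : t.ge 0 X) (W : THeart t) :
    (W.obj ⟶ X) ≃ (W ⟶ h.H.obj X) :=
  Equiv.ofBijective _ (h.bij_ge X W hX)

lemma homEquivOfGE_comp (h : TCohomology t) {X Y : C} (hX : t.ge 0 X) (hY : t.ge 0 Y)
    (W : THeart t) (g : W.obj ⟶ X) (φ : X ⟶ Y) :
    h.homEquivOfGE Y hY W (g ≫ φ) = h.homEquivOfGE X hX W g ≫ h.H.map φ := by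
  simp [homEquivOfGE]

lemma homEquivOfGE_map_comp (h : TCohomology t) {X : C} (hX : t.ge 0 X) {W W' : THeart t}
    (w : W' ⟶ W) (g : W.obj ⟶ X) :
    h.homEquivOfGE X hX W' ((THeartIncl t).map w ≫ g) = w ≫ h.homEquivOfGE X hX W g := by
  simp only [homEquivOfGE, Equiv.ofBijective_apply, Functor.map_comp]
  have hnat : w ≫ h.restriction.inv.app W =
      h.restriction.inv.app W' ≫ h.H.map ((THeartIncl t).map w) :=
    h.restriction.inv.naturality w
  rw [← assoc w, hnat, assoc]

lemma bijective_map_of_heart (h : TCohomology t) {L : C} (hL : t.ge 0 L) (W : THeart t) :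
    Function.Bijective (fun f : W.obj ⟶ L => h.H.map f) :=
  (((isIso_iff_coyoneda_map_bijective _).1 inferInstance _).of_comp_iff' _).1
    (h.bij_ge L W hL)

lemma bijective_map_of_le (h : TCohomology t) {L : C}
    (hle : ∀ U, t.le (-1) U → ∀ f : U ⟶ L, f = 0) {X : C} (hX : t.le 0 X) :
    Function.Bijective (fun f : X ⟶ L => h.H.map f) := by
  obtain ⟨Y₁, Y₂, hY₁, hY₂, a, b, c, hT⟩ := t.exists_triangle X (-1) 0 (by norm_num)
  have hY₁' : t.le (-1) (Y₁⟦(1 : ℤ)⟧) :=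
    t.le_monotone (by norm_num) _ (t.le_shift (-1) 1 (-2) (by norm_num) _ hY₁)
  have hY₁'' : t.le (-1) (Y₁⟦(1 : ℤ)⟧⟦(-1 : ℤ)⟧) :=
    t.le_shift (-2) (-1) (-1) (by norm_num) _ (t.le_shift (-1) 1 (-2) (by norm_num) _ hY₁)
  have hY₂' : t.le 0 Y₂ :=
    (t.isLE₂ _ (rot_of_distTriang _ hT) 0 ⟨hX⟩ ⟨t.le_monotone (by norm_num) _ hY₁'⟩).le
  exact (h.H.bijective_map_iff_of_distTriang _ (rot_of_distTriang _ hT)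
    (hle _ hY₁') (hle _ hY₁'') (h.zero_of_le _ hY₁') (h.zero_of_le _ hY₁'')).2
      (h.bijective_map_of_heart (t.ge_of_hom_eq_zero hle) ⟨Y₂, hY₂', hY₂⟩)

lemma bijective_map (h : TCohomology t) {L : C}
    (hle : ∀ U, t.le (-1) U → ∀ f : U ⟶ L, f = 0)
    (hge : ∀ U, t.ge 1 U → ∀ f : U ⟶ L, f = 0) (X : C) :
    Function.Bijective (fun f : X ⟶ L => h.H.map f) := by
  obtain ⟨A, B, hA, hB, a, b, c, hT⟩ := t.exists_triangle X 0 1 (by norm_num)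
  have hB' : t.ge 1 (B⟦(-1 : ℤ)⟧) :=
    t.ge_antitone (by norm_num) _ (t.ge_shift 1 (-1) 2 (by norm_num) _ hB)
  exact (h.H.bijective_map_iff_of_distTriang _ hT (hge _ hB) (hge _ hB')
    (h.zero_of_ge _ hB) (h.zero_of_ge _ hB')).1 (h.bijective_map_of_le hle hA)

lemma isDerivedInjective_of_hom_eq_zero (h : TCohomology t) {L : C} {J : THeart t}
    (hle : ∀ U, t.le (-1) U → ∀ f : U ⟶ L, f = 0)
    (hge : ∀ U, t.ge 1 U → ∀ f : U ⟶ L, f = 0) (ε : h.H.obj L ≅ J) :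
    IsDerivedInjective t h J L :=
  ⟨fun X => (Equiv.ofBijective _ (h.bijective_map hle hge X)).trans ε.homToEquiv,
    fun X Y f g => by simp⟩

lemma isIso_map_of_bijective_comp (h : TCohomology t) {X Y : C} (φ : X ⟶ Y) (hX : t.ge 0 X)
    (hY : t.ge 0 Y)
    (hφ : ∀ W : THeart t, Function.Bijective (fun g : W.obj ⟶ X => g ≫ φ)) :
    IsIso (h.H.map φ) := by
  refine isIso_of_yoneda_map_bijective _ fun W => ?_
  have hcomm : (fun u : W ⟶ h.H.obj X => u ≫ h.H.map φ) ∘ h.homEquivOfGE X hX W =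
      h.homEquivOfGE Y hY W ∘ (fun g => g ≫ φ) :=
    funext fun g => (h.homEquivOfGE_comp hX hY W g φ).symm
  rw [← (h.homEquivOfGE X hX W).bijective.of_comp_iff, hcomm]
  exact (h.homEquivOfGE Y hY W).bijective.comp (hφ W)

lemma eq_zero_of_comp_mono (h : TCohomology t) {X Y : THeart t} (f : X ⟶ Y) [Mono f] {V : C}
    (hV : t.le 0 V) (v : V ⟶ X.obj) (hv : v ≫ (THeartIncl t).map f = 0) : v = 0 := by
  refine (h.bij_le V X hV).1 (zero_of_comp_mono f ?_ |>.trans (by simp))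
  have hnat : h.H.map ((THeartIncl t).map f) ≫ h.restriction.hom.app Y =
      h.restriction.hom.app X ≫ f :=
    h.restriction.hom.naturality f
  simp only [assoc, ← hnat, ← Functor.map_comp_assoc, hv, Functor.map_zero, zero_comp]

lemma ge_one_of_mono (h : TCohomology t) {X Y : THeart t} (f : X ⟶ Y) [Mono f] {K : C}
    {a : K ⟶ X.obj} {δ : Y.obj ⟶ K⟦(1 : ℤ)⟧}
    (hT : Triangle.mk a ((THeartIncl t).map f) δ ∈ distTriang C) :
    t.ge 1 K := by
  refine t.ge_of_hom_eq_zero fun U hU ψ => ?_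
  have hψa : ψ ≫ a = 0 :=
    h.eq_zero_of_comp_mono f hU _ (by
      rw [assoc, show a ≫ (THeartIncl t).map f = 0 from comp_distTriang_mor_zero₁₂ _ hT,
        comp_zero])
  obtain ⟨g, rfl⟩ := Triangle.coyoneda_exact₂ _ (inv_rot_of_distTriang _ hT) ψ hψa
  rw [t.zero' g hU (t.ge_shift 0 (-1) 1 (by norm_num) _ Y.property.2)]
  exact zero_comp

lemma mono_of_mono_map (h : TCohomology t) {X Y : THeart t} (f : X ⟶ Y)
    [Mono (h.H.map ((THeartIncl t).map f))] : Mono f := by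
  have := Functor.ReflectsMonomorphisms.of_iso h.restriction.symm
  exact (THeartIncl t ⋙ h.H).mono_of_mono_map ‹_›

end TCohomology

namespace IsDerivedInjective

variable {t : TStructure C} [Abelian (THeart t)] {h : TCohomology t} {I : THeart t} {LI : C}

lemma eq_zero_of_isZero (hLI : IsDerivedInjective t h I LI) {U : C} (hU : IsZero (h.H.obj U))
    (f : U ⟶ LI) : f = 0 := by
  obtain ⟨e, -⟩ := hLI
  exact (e U).injective (hU.eq_of_src _ _)

lemma exists_bijective_comp (hLI : IsDerivedInjective t h I LI) :
    ∃ η : I.obj ⟶ LI, ∀ X : C, t.le 0 X →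
      Function.Bijective (fun f : X ⟶ I.obj => f ≫ η) := by
  obtain ⟨e, he⟩ := hLI
  refine ⟨(e I.obj).symm (h.restriction.hom.app I), fun X hX => ?_⟩
  have hcomm : e X ∘ (fun f => f ≫ (e I.obj).symm (h.restriction.hom.app I)) =
      fun f => h.H.map f ≫ h.restriction.hom.app I :=
    funext fun f => by simp [he]
  rw [← (e X).bijective.of_comp_iff', hcomm]
  exact h.bij_le X I hX

end IsDerivedInjective

namespace CategoryTheory.Adjunction

variable {𝒜 ℬ : Type*} [Category 𝒜] [Category ℬ] {G : ℬ ⥤ 𝒜} {F : 𝒜 ⥤ ℬ}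

lemma eq_zero_of_homEquiv_symm_eq_zero [HasZeroMorphisms 𝒜] [HasZeroMorphisms ℬ]
    [F.PreservesZeroMorphisms] (adj : G ⊣ F) {U : ℬ} {Y : 𝒜} (f : U ⟶ F.obj Y)
    (hf : (adj.homEquiv U Y).symm f = 0) : f = 0 := by
  rw [← (adj.homEquiv U Y).apply_symm_apply f, hf, homEquiv_unit, Functor.map_zero, comp_zero]

lemma bijective_comp_map_iff (adj : G ⊣ F) {A B : 𝒜} (η : A ⟶ B) (W : ℬ) :
    Function.Bijective (fun g : W ⟶ F.obj A => g ≫ F.map η) ↔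
      Function.Bijective (fun f : G.obj W ⟶ A => f ≫ η) := by
  have hcomm : (fun g : W ⟶ F.obj A => g ≫ F.map η) ∘ adj.homEquiv W A =
      adj.homEquiv W B ∘ (fun f => f ≫ η) :=
    funext fun f => (adj.homEquiv_naturality_right f η).symm
  rw [← (adj.homEquiv W A).bijective.of_comp_iff, hcomm,
    (adj.homEquiv W B).bijective.of_comp_iff']

end CategoryTheory.Adjunction

section Heart

variable {D : Type u₂} [Category.{v₂} D] [Preadditive D] [HasZeroObject D]
  [HasShift D ℤ] [∀ n : ℤ, (shiftFunctor D n).Additive] [Pretriangulated D]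
  {tC : TStructure C} {tD : TStructure D}

lemma CategoryTheory.Adjunction.ge_obj {G : D ⥤ C} {F : C ⥤ D} [F.PreservesZeroMorphisms]
    (adj : G ⊣ F) (hGle : ∀ (n : ℤ) (Y : D), tD.le n Y → tC.le n (G.obj Y)) {n : ℤ}
    {X : C} (hX : tC.ge n X) : tD.ge n (F.obj X) :=
  tD.ge_of_hom_eq_zero fun U hU f => adj.eq_zero_of_homEquiv_symm_eq_zero f
    (tC.zero_of_isLE_of_isGE _ (n - 1) n (by omega) ⟨hGle _ _ hU⟩ ⟨hX⟩)

def heartRestrict (G : D ⥤ C) (hGle : ∀ (n : ℤ) (Y : D), tD.le n Y → tC.le n (G.obj Y))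
    (hGge : ∀ (n : ℤ) (Y : D), tD.ge n Y → tC.ge n (G.obj Y)) : THeart tD ⥤ THeart tC :=
  ObjectProperty.lift _ (THeartIncl tD ⋙ G)
    fun W => ⟨hGle 0 _ W.property.1, hGge 0 _ W.property.2⟩

def TCohomology.heartFunctor [Abelian (THeart tD)] (hD : TCohomology tD) (F : C ⥤ D) :
    THeart tC ⥤ THeart tD :=
  THeartIncl tC ⋙ F ⋙ hD.H

variable [Abelian (THeart tD)]

lemma heartRestrict_preservesMonomorphisms [Abelian (THeart tC)] (hC : TCohomology tC)
    (hD : TCohomology tD)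
    (G : D ⥤ C) [G.CommShift ℤ] [G.IsTriangulated]
    (hGle : ∀ (n : ℤ) (Y : D), tD.le n Y → tC.le n (G.obj Y))
    (hGge : ∀ (n : ℤ) (Y : D), tD.ge n Y → tC.ge n (G.obj Y)) :
    (heartRestrict G hGle hGge).PreservesMonomorphisms where
  preserves {X Y} f _ := by
    obtain ⟨K, a, δ, hT⟩ := distinguished_cocone_triangle₁ ((THeartIncl tD).map f)
    have : Mono (hC.H.map ((THeartIncl tC).map ((heartRestrict G hGle hGge).map f))) :=
      hC.H.mono_map_mor₂_of_isZero _ (G.map_distinguished _ hT)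
        (hC.zero_of_ge _ (hGge 1 K (hD.ge_one_of_mono f hT)))
    exact hC.mono_of_mono_map _

noncomputable def CategoryTheory.Adjunction.heartHomEquiv {G : D ⥤ C} {F : C ⥤ D}
    [F.PreservesZeroMorphisms] (adj : G ⊣ F) (hD : TCohomology tD)
    (hGle : ∀ (n : ℤ) (Y : D), tD.le n Y → tC.le n (G.obj Y))
    (hGge : ∀ (n : ℤ) (Y : D), tD.ge n Y → tC.ge n (G.obj Y))
    (W : THeart tD) (V : THeart tC) :
    ((heartRestrict G hGle hGge).obj W ⟶ V) ≃ (W ⟶ (hD.heartFunctor F).obj V) :=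
  InducedCategory.homEquiv.trans ((adj.homEquiv W.obj V.obj).trans
    (hD.homEquivOfGE _ (adj.ge_obj hGle V.property.2) W))

lemma CategoryTheory.Adjunction.heartHomEquiv_apply {G : D ⥤ C} {F : C ⥤ D}
    [F.PreservesZeroMorphisms] (adj : G ⊣ F) (hD : TCohomology tD)
    (hGle : ∀ (n : ℤ) (Y : D), tD.le n Y → tC.le n (G.obj Y))
    (hGge : ∀ (n : ℤ) (Y : D), tD.ge n Y → tC.ge n (G.obj Y)) {W : THeart tD} {V : THeart tC}
    (f : (heartRestrict G hGle hGge).obj W ⟶ V) :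
    adj.heartHomEquiv hD hGle hGge W V f =
      hD.homEquivOfGE _ (adj.ge_obj hGle V.property.2) W (adj.homEquiv W.obj V.obj f.hom) :=
  rfl

noncomputable def CategoryTheory.Adjunction.heart {G : D ⥤ C} {F : C ⥤ D}
    [F.PreservesZeroMorphisms] (adj : G ⊣ F) (hD : TCohomology tD)
    (hGle : ∀ (n : ℤ) (Y : D), tD.le n Y → tC.le n (G.obj Y))
    (hGge : ∀ (n : ℤ) (Y : D), tD.ge n Y → tC.ge n (G.obj Y)) :
    heartRestrict G hGle hGge ⊣ hD.heartFunctor F :=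
  Adjunction.mkOfHomEquiv
    { homEquiv := adj.heartHomEquiv hD hGle hGge
      homEquiv_naturality_left_symm := fun {W' W V} w g => by
        obtain ⟨x, rfl⟩ := (adj.heartHomEquiv hD hGle hGge W V).surjective g
        rw [Equiv.symm_apply_apply, Equiv.symm_apply_eq, heartHomEquiv_apply,
          heartHomEquiv_apply, InducedCategory.comp_hom]
        erw [adj.homEquiv_naturality_left, hD.homEquivOfGE_map_comp]
        rfl
      homEquiv_naturality_right := fun {W V V'} f v => by
        rw [heartHomEquiv_apply, heartHomEquiv_apply, InducedCategory.comp_hom]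
        erw [adj.homEquiv_naturality_right, hD.homEquivOfGE_comp]
        rfl }

end Heart

/-- Let `F : T ⥤ S` be an exact functor between triangulated categories
with t-structures, both having derived injectives. If `F` admits a t-exact left adjoint
`G`, then `F` preserves derived injectives: for every injective `I` of `T^♥` and every
derived injective `LI` associated to `I`, the object `F(LI)` is a derived injective
associated to `F^♥(I) = H⁰(F(I))` (which is injective in `S^♥`); in particular
`F(L_T(I)) ≅ L_S(F^♥(I))` and `F` restricts to a functor `DGInj(T) → DGInj(S)`. -/
theorem statement17 {D : Type u₂} [Category.{v₂} D] [Preadditive D] [HasZeroObject D]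
    [HasShift D ℤ] [∀ n : ℤ, (shiftFunctor D n).Additive] [Pretriangulated D]
    (tC : TStructure C) (tD : TStructure D)
    [Abelian (THeart tC)] [Abelian (THeart tD)]
    (hC : TCohomology tC) (hD : TCohomology tD)
    (hDIC : ∀ I : THeart tC, Injective I → ∃ LI : C, IsDerivedInjective tC hC I LI)
    (hDID : ∀ I : THeart tD, Injective I → ∃ LI : D, IsDerivedInjective tD hD I LI)
    (F : C ⥤ D) (G : D ⥤ C)
    [F.CommShift ℤ] [F.IsTriangulated] [G.CommShift ℤ] [G.IsTriangulated]
    (adj : G ⊣ F)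
    (hGle : ∀ (n : ℤ) (Y : D), tD.le n Y → tC.le n (G.obj Y))
    (hGge : ∀ (n : ℤ) (Y : D), tD.ge n Y → tC.ge n (G.obj Y))
    (I : THeart tC) (hI : Injective I)
    (LI : C) (hLI : IsDerivedInjective tC hC I LI) :
    Injective (hD.H.obj (F.obj I.obj)) ∧
      IsDerivedInjective tD hD (hD.H.obj (F.obj I.obj)) (F.obj LI) := by
  have hFLI_le : ∀ U, tD.le (-1) U → ∀ f : U ⟶ F.obj LI, f = 0 := fun U hU f =>
    adj.eq_zero_of_homEquiv_symm_eq_zero f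
      (hLI.eq_zero_of_isZero (hC.zero_of_le _ (hGle _ _ hU)) _)
  have hFLI_ge : ∀ U, tD.ge 1 U → ∀ f : U ⟶ F.obj LI, f = 0 := fun U hU f =>
    adj.eq_zero_of_homEquiv_symm_eq_zero f
      (hLI.eq_zero_of_isZero (hC.zero_of_ge _ (hGge _ _ hU)) _)
  obtain ⟨η, hη⟩ := hLI.exists_bijective_comp
  have : IsIso (hD.H.map (F.map η)) :=
    hD.isIso_map_of_bijective_comp _ (adj.ge_obj hGle I.property.2)
      (tD.ge_of_hom_eq_zero hFLI_le)
      fun W => (adj.bijective_comp_map_iff η _).2 (hη _ (hGle 0 _ W.property.1))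
  have := heartRestrict_preservesMonomorphisms hC hD G hGle hGge
  exact ⟨(adj.heart hD hGle hGge).map_injective I hI,
    hD.isDerivedInjective_of_hom_eq_zero hFLI_le hFLI_ge (asIso (hD.H.map (F.map η))).symm⟩
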